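/- arXiv:2311.10279 — 2 statements merged into one kernel-verified Lean document; each statement's English description precedes it below -/
import Mathlib

section
/- Fix n ≥ 2, γ ∈ ℝ^p, covariates z_ij ∈ ℝ^p (1 ≤ i < j ≤ n, z_ji = z_ij) and any vector d̃ ∈ ℝ^n, and define F_γ : ℝ^n → ℝ^n by F_{γ,i}(β) = Σ_{j≠i} μ(β_i + β_j + z_ij^⊤γ) − d̃_i. Then the Jacobian matrix F′_γ is Lipschitz continuous on ℝ^n with Lipschitz coefficient n − 1 in the following sense: for all x, y, v ∈ ℝ^n, ‖(F′_γ(x) − F′_γ(y)) v‖_∞ ≤ (n − 1)‖x − y‖_∞ ‖v‖_∞. -/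
/-!
Row `i` of `(F′_γ(x) − F′_γ(y)) v` is `∑_{j ≠ i} (μ′(s_ij(x)) − μ′(s_ij(y))) (v_i + v_j)`, where
`s_ij(β) = β_i + β_j + z_ijᵀγ`. Since `|μ″| ≤ 1/4`, the difference of the `μ′` values is at most
`(1/4) · 2‖x − y‖∞`, while `|v_i + v_j| ≤ 2‖v‖∞`; so each of the `n − 1` terms is at most
`‖x − y‖∞ ‖v‖∞`.
-/

open Real Finset

noncomputable section

/-- The logistic function `μ(x) = eˣ/(1+eˣ)`. -/
def mu (x : ℝ) : ℝ := exp x / (1 + exp x)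

/-- ℓ∞ norm of a finite vector. -/
def supNorm {k : ℕ} (x : Fin k → ℝ) : ℝ := ⨆ i, |x i|

/-- `F_{γ,i}(β) = ∑_{j≠i} μ(β_i + β_j + z_ij^⊤γ) − d̃_i`. -/
def Fgamma {n p : ℕ} (z : Fin n → Fin n → Fin p → ℝ) (γ : Fin p → ℝ) (dtil : Fin n → ℝ)
    (β : Fin n → ℝ) (i : Fin n) : ℝ :=
  (∑ j ∈ univ.erase i, mu (β i + β j + ∑ t, z i j t * γ t)) - dtil i

/-- the Jacobian matrix of `F_γ`: `(F′_γ(x))_{ij} = ∂F_{γ,i}/∂β_j` at `x`. -/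
def Jac {n p : ℕ} (z : Fin n → Fin n → Fin p → ℝ) (γ : Fin p → ℝ) (dtil : Fin n → ℝ)
    (x : Fin n → ℝ) : Matrix (Fin n) (Fin n) ℝ :=
  Matrix.of fun i j => fderiv ℝ (fun β => Fgamma z γ dtil β i) x (Pi.single j 1)

def mu' (x : ℝ) : ℝ := exp x / (1 + exp x) ^ 2

lemma hasDerivAt_mu (x : ℝ) : HasDerivAt mu (mu' x) x := by
  have h1 : 1 + exp x ≠ 0 := by positivity
  refine ((hasDerivAt_exp x).fun_div ((hasDerivAt_const x 1).fun_add (hasDerivAt_exp x))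
    h1).congr_deriv ?_
  rw [mu']
  field_simp
  ring

lemma hasDerivAt_mu' (x : ℝ) :
    HasDerivAt mu' (exp x * (1 - exp x) / (1 + exp x) ^ 3) x := by
  have h1 : 1 + exp x ≠ 0 := by positivity
  refine ((hasDerivAt_exp x).fun_div (((hasDerivAt_const x 1).fun_add (hasDerivAt_exp x)).fun_pow 2)
    (pow_ne_zero 2 h1)).congr_deriv ?_
  field_simp
  ring

lemma abs_exp_mul_one_sub_exp_div_le (x : ℝ) :
    |exp x * (1 - exp x) / (1 + exp x) ^ 3| ≤ 1 / 4 := by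
  have hu : 0 < exp x := exp_pos x
  rw [abs_div, abs_of_pos (by positivity : (0 : ℝ) < (1 + exp x) ^ 3), div_le_iff₀ (by positivity),
    abs_le]
  constructor <;> nlinarith [sq_nonneg (1 - exp x), mul_pos hu hu, mul_pos (mul_pos hu hu) hu]

lemma lipschitzWith_mu' : LipschitzWith (1 / 4) mu' := by
  refine lipschitzWith_of_nnnorm_deriv_le (fun x => (hasDerivAt_mu' x).differentiableAt) fun x => ?_
  rw [← NNReal.coe_le_coe, coe_nnnorm, (hasDerivAt_mu' x).deriv]
  exact abs_exp_mul_one_sub_exp_div_le x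

lemma abs_le_supNorm {k : ℕ} (u : Fin k → ℝ) (i : Fin k) : |u i| ≤ supNorm u :=
  le_ciSup (f := fun i => |u i|) (Set.finite_range _).bddAbove i

lemma abs_add_le_two_mul_supNorm {k : ℕ} (u : Fin k → ℝ) (i j : Fin k) :
    |u i + u j| ≤ 2 * supNorm u := by
  linarith [abs_add_le (u i) (u j), abs_le_supNorm u i, abs_le_supNorm u j]

lemma abs_mu'_sub_mul_le {k : ℕ} (x y v : Fin k → ℝ) (i j : Fin k) (c : ℝ) :
    |(mu' (x i + x j + c) - mu' (y i + y j + c)) * (v i + v j)| ≤ supNorm (x - y) * supNorm v := by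
  have hmu' : |mu' (x i + x j + c) - mu' (y i + y j + c)| ≤ supNorm (x - y) / 2 := by
    have h := lipschitzWith_mu'.dist_le_mul (x i + x j + c) (y i + y j + c)
    have hxy : x i + x j + c - (y i + y j + c) = (x - y) i + (x - y) j := by
      simp only [Pi.sub_apply]; ring
    rw [Real.dist_eq, Real.dist_eq, hxy] at h
    push_cast at h
    linarith [abs_add_le_two_mul_supNorm (x - y) i j]
  rw [abs_mul, show supNorm (x - y) * supNorm v = supNorm (x - y) / 2 * (2 * supNorm v) by ring]
  exact mul_le_mul hmu' (abs_add_le_two_mul_supNorm v i j) (abs_nonneg _)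
    ((abs_nonneg _).trans hmu')

lemma mulVec_of_fderiv_single {𝕜 ι κ : Type*} [NontriviallyNormedField 𝕜] [Fintype κ]
    [DecidableEq κ] (f : (κ → 𝕜) → ι → 𝕜) (x v : κ → 𝕜) :
    (Matrix.of fun i j => fderiv 𝕜 (fun β => f β i) x (Pi.single j 1)).mulVec v =
      fun i => fderiv 𝕜 (fun β => f β i) x v := by
  ext i
  conv_rhs => rw [← univ_sum_single v, map_sum]
  simp only [Matrix.mulVec, dotProduct, Matrix.of_apply]
  refine sum_congr rfl fun l _ => ?_
  rw [show Pi.single l (v l) = v l • Pi.single l (1 : 𝕜) by simp [← Pi.single_smul'], map_smul,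
    smul_eq_mul, mul_comm]

lemma fderiv_Fgamma_apply {n p : ℕ} (z : Fin n → Fin n → Fin p → ℝ) (γ : Fin p → ℝ)
    (dtil x v : Fin n → ℝ) (i : Fin n) :
    fderiv ℝ (fun β => Fgamma z γ dtil β i) x v =
      ∑ j ∈ univ.erase i, mu' (x i + x j + ∑ t, z i j t * γ t) * (v i + v j) := by
  let L : Fin n → (Fin n → ℝ) →L[ℝ] ℝ := fun j =>
    ContinuousLinearMap.proj (R := ℝ) (φ := fun _ : Fin n => ℝ) i + ContinuousLinearMap.proj j
  have hterm : ∀ j ∈ univ.erase i,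
      HasFDerivAt (fun β : Fin n → ℝ => mu (β i + β j + ∑ t, z i j t * γ t))
        (mu' (x i + x j + ∑ t, z i j t * γ t) • L j) x := fun j _ =>
    (hasDerivAt_mu _).comp_hasFDerivAt x ((L j).hasFDerivAt.add_const _)
  unfold Fgamma
  rw [((HasFDerivAt.fun_sum hterm).sub_const (dtil i)).fderiv, _root_.sum_apply]
  exact sum_congr rfl fun j _ => rfl

theorem Fgamma_jacobian_lipschitz_general {n p : ℕ}
    (z : Fin n → Fin n → Fin p → ℝ)
    (γ : Fin p → ℝ) (dtil : Fin n → ℝ) :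
    ∀ x y v : Fin n → ℝ,
      supNorm ((Jac z γ dtil x - Jac z γ dtil y).mulVec v) ≤
        ((n : ℝ) - 1) * supNorm (x - y) * supNorm v := by
  intro x y v
  rcases isEmpty_or_nonempty (Fin n) with _ | _
  · simp [supNorm]
  refine ciSup_le fun i => ?_
  rw [Matrix.sub_mulVec, Jac, Jac, mulVec_of_fderiv_single, mulVec_of_fderiv_single, Pi.sub_apply,
    fderiv_Fgamma_apply, fderiv_Fgamma_apply, ← sum_sub_distrib]
  calc _ ≤ ∑ j ∈ univ.erase i, |(mu' (x i + x j + ∑ t, z i j t * γ t) -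
          mu' (y i + y j + ∑ t, z i j t * γ t)) * (v i + v j)| := by
        simp only [sub_mul]; exact abs_sum_le_sum_abs _ _
    _ ≤ ∑ _j ∈ univ.erase i, supNorm (x - y) * supNorm v :=
        sum_le_sum fun j _ => abs_mu'_sub_mul_le x y v i j _
    _ = ((n : ℝ) - 1) * supNorm (x - y) * supNorm v := by
        rw [sum_const, nsmul_eq_mul, cast_card_erase_of_mem (mem_univ i), card_univ,
          Fintype.card_fin, mul_assoc]

/-- the Jacobian `F′_γ` is Lipschitz continuous with coefficient `n − 1`. -/
theorem Fgamma_jacobian_lipschitz {n p : ℕ} (hn : 2 ≤ n)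
    (z : Fin n → Fin n → Fin p → ℝ) (hzsym : ∀ i j, z i j = z j i)
    (γ : Fin p → ℝ) (dtil : Fin n → ℝ) :
    ∀ x y v : Fin n → ℝ,
      supNorm ((Jac z γ dtil x - Jac z γ dtil y).mulVec v) ≤
        ((n : ℝ) - 1) * supNorm (x - y) * supNorm v :=
  Fgamma_jacobian_lipschitz_general z γ dtil

end
end

section
/- Let n ≥ 3 and 0 < m ≤ M, and let V = (v_ij) be an n×n symmetric matrix with v_ii = Σ_{j≠i} v_ij for every i and m ≤ v_ij ≤ M for all i ≠ j. Then V is invertible, and with S = diag(1/v_11, …, 1/v_nn), the approximation error satisfies ‖V^{−1} − S‖_max ≤ (1/(n−1)²)·( M/(2m²) + n M²/(2(n−2)m³) + (3n−2)/(2nm) ), where ‖A‖_max = max_{i,j} |A_ij|. -/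
/-!
For a symmetric diagonally balanced `V` the quadratic form is
`xᵀ V x = ½ ∑_{i ≠ j} v_ij (x_i + x_j)²`, so the off-diagonal bounds `m ≤ v_ij ≤ M` give
`m Q ≤ V ≤ M Q` in the Loewner order, where `Q = (n - 2) I + J` is the signless Laplacian of the
complete graph (the case `v_ij = 1`). Hence `V` is positive definite, and since inversion reverses
the Loewner order, `Q⁻¹ / M ≤ V⁻¹ ≤ Q⁻¹ / m` with `Q⁻¹ = (I - J / (2 (n - 1))) / (n - 2)`.

With `S = diag(1 / v_ii)` and `A = V S - I` one has `V⁻¹ - S = Aᵀ V⁻¹ A - (S V S - S)`. The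
columns `a_i` of `A` are probability vectors with entries at most `M / ((n - 1) m)`, so polarizing
`a_iᵀ V⁻¹ a_j` through the quadratic forms of `a_i ± a_j` and the two bounds on `V⁻¹` controls the
first term; the second is `v_ij / (v_ii v_jj)` off the diagonal and `0` on it.
-/

open Finset Matrix

noncomputable section

namespace Matrix

variable {ι : Type*}

section Fintype

variable [Fintype ι]

lemma dotProduct_le_of_le_of_sum_eq_one {a b : ι → ℝ} {t : ℝ} (ha : ∀ k, a k ≤ t) (hb₀ : 0 ≤ b)
    (hb : ∑ k, b k = 1) : a ⬝ᵥ b ≤ t :=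
  calc a ⬝ᵥ b ≤ (fun _ => t) ⬝ᵥ b := dotProduct_le_dotProduct_of_nonneg_right ha hb₀
    _ = t := by simp [dotProduct, ← mul_sum, hb]

lemma abs_dotProduct_mulVec_le {W : Matrix ι ι ℝ} (hW : W.IsSymm) {k s t m M : ℝ} (hk : 0 < k)
    (hm : 0 < m) (hmM : m ≤ M) (hst : 2 * s ≤ t)
    (hlow : ∀ x, (x ⬝ᵥ x - s * (∑ i, x i) ^ 2) / (M * k) ≤ x ⬝ᵥ W *ᵥ x)
    (hup : ∀ x, x ⬝ᵥ W *ᵥ x ≤ (x ⬝ᵥ x - s * (∑ i, x i) ^ 2) / (m * k))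
    {a b : ι → ℝ} (ha : ∑ i, a i = 1) (hb : ∑ i, b i = 1) (haa : a ⬝ᵥ a ≤ t) (hbb : b ⬝ᵥ b ≤ t)
    (hab₀ : 0 ≤ a ⬝ᵥ b) (hab : a ⬝ᵥ b ≤ t) :
    |a ⬝ᵥ W *ᵥ b| ≤ (t - s) / (m * k) := by
  have hba : b ⬝ᵥ W *ᵥ a = a ⬝ᵥ W *ᵥ b := by
    rw [dotProduct_mulVec, ← mulVec_transpose, hW, dotProduct_comm]
  have hsub := hlow (a - b)
  have hadd := hlow (a + b)
  have hupa := hup a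
  have hupb := hup b
  simp only [Pi.sub_apply, Pi.add_apply, sum_sub_distrib, sum_add_distrib, ha, hb, mulVec_sub,
    mulVec_add, dotProduct_sub, sub_dotProduct, dotProduct_add, add_dotProduct, hba,
    dotProduct_comm b a, div_eq_mul_inv] at hsub hadd hupa hupb ⊢
  have hM : 0 < M := hm.trans_le hmM
  have hv : 0 ≤ (M * k)⁻¹ := by positivity
  have huv : (M * k)⁻¹ ≤ (m * k)⁻¹ := inv_anti₀ (by positivity) (by gcongr)
  have hαβ : 0 ≤ (2 * t - a ⬝ᵥ a - b ⬝ᵥ b) * ((m * k)⁻¹ - (M * k)⁻¹) :=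
    mul_nonneg (by linarith) (by linarith)
  rw [abs_le]
  constructor
  · linarith [mul_nonneg (by linarith : 0 ≤ t - 2 * s + a ⬝ᵥ b) hv]
  · linarith [mul_nonneg (by linarith : 0 ≤ t - a ⬝ᵥ b) hv]

variable [DecidableEq ι]

lemma dotProduct_inv_mulVec_le_of_le {A B : Matrix ι ι ℝ} (hA : IsUnit A.det) (hB : IsUnit B.det)
    (hBs : B.IsSymm) (hB₀ : ∀ w, 0 ≤ w ⬝ᵥ B *ᵥ w) (hBA : ∀ w, w ⬝ᵥ B *ᵥ w ≤ w ⬝ᵥ A *ᵥ w)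
    (x : ι → ℝ) : x ⬝ᵥ A⁻¹ *ᵥ x ≤ x ⬝ᵥ B⁻¹ *ᵥ x := by
  set y := A⁻¹ *ᵥ x
  set z := B⁻¹ *ᵥ x
  have hy : A *ᵥ y = x := by rw [mulVec_mulVec, mul_nonsing_inv _ hA, one_mulVec]
  have hz : B *ᵥ z = x := by rw [mulVec_mulVec, mul_nonsing_inv _ hB, one_mulVec]
  have hBzy : z ⬝ᵥ B *ᵥ y = x ⬝ᵥ y := by
    rw [dotProduct_mulVec, ← mulVec_transpose, hBs, hz]
  have hexp : (y - z) ⬝ᵥ B *ᵥ (y - z) = y ⬝ᵥ B *ᵥ y - 2 * (x ⬝ᵥ y) + x ⬝ᵥ z := by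
    rw [mulVec_sub, hz, dotProduct_sub, sub_dotProduct, sub_dotProduct, hBzy,
      dotProduct_comm y x, dotProduct_comm z x]
    ring
  have hAy : y ⬝ᵥ A *ᵥ y = x ⬝ᵥ y := by rw [hy, dotProduct_comm]
  linarith [hB₀ (y - z), hBA y]

lemma inv_sub_eq_transpose_mul_inv_mul {V : Matrix ι ι ℝ} (hV : IsUnit V.det) (hsym : V.IsSymm)
    (S : Matrix ι ι ℝ) :
    V⁻¹ - S = (V * S - 1)ᵀ * V⁻¹ * (V * S - 1) - (Sᵀ * V * S - Sᵀ) := by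
  rw [transpose_sub, transpose_mul, hsym, transpose_one]
  simp only [sub_mul, mul_sub, Matrix.mul_assoc, nonsing_inv_mul_cancel_left V _ hV,
    Matrix.mul_one, Matrix.one_mul, mul_nonsing_inv _ hV]
  abel

def IsDiagBalanced (V : Matrix ι ι ℝ) : Prop :=
  ∀ i, V i i = ∑ j ∈ univ.erase i, V i j

namespace IsDiagBalanced

variable {V W : Matrix ι ι ℝ}

lemma smul (hV : V.IsDiagBalanced) (c : ℝ) : (c • V).IsDiagBalanced := fun i => by
  simp only [smul_apply, smul_eq_mul, hV i, mul_sum]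

lemma two_mul_dotProduct_mulVec (hV : V.IsDiagBalanced) (hsym : V.IsSymm) (x : ι → ℝ) :
    2 * (x ⬝ᵥ V *ᵥ x) = ∑ i, ∑ j ∈ univ.erase i, V i j * (x i + x j) ^ 2 := by
  have hrow : ∀ i, ∑ j, V i j = 2 * V i i := fun i => by
    rw [← add_sum_erase _ _ (mem_univ i), ← hV i]; ring
  have hcol : ∑ i, ∑ j, V i j * x j ^ 2 = ∑ j, 2 * V j j * x j ^ 2 := by
    rw [sum_comm]
    refine sum_congr rfl fun j _ => ?_
    rw [← sum_mul, ← hrow j]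
    simp_rw [hsym.apply]
  have hdot : x ⬝ᵥ V *ᵥ x = ∑ i, ∑ j, x i * V i j * x j := by
    simp only [dotProduct, mulVec, mul_sum, mul_assoc]
  have hexp : ∀ i j, V i j * (x i + x j) ^ 2 =
      V i j * x i ^ 2 + V i j * x j ^ 2 + 2 * (x i * V i j * x j) := fun i j => by ring
  have hdiag : ∑ i, x i * V i i * x i = ∑ i, V i i * x i ^ 2 :=
    sum_congr rfl fun i _ => by ring
  simp_rw [sum_erase_eq_sub (mem_univ _), sum_sub_distrib, hexp, sum_add_distrib, ← sum_mul,
    hrow, hcol, ← mul_sum, ← hdot, hdiag, mul_assoc (2 : ℝ), ← mul_sum]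
  ring

lemma dotProduct_mulVec_le (hV : V.IsDiagBalanced) (hW : W.IsDiagBalanced) (hVs : V.IsSymm)
    (hWs : W.IsSymm) (hVW : ∀ i j, i ≠ j → V i j ≤ W i j) (x : ι → ℝ) :
    x ⬝ᵥ V *ᵥ x ≤ x ⬝ᵥ W *ᵥ x := by
  have h : 2 * (x ⬝ᵥ V *ᵥ x) ≤ 2 * (x ⬝ᵥ W *ᵥ x) := by
    rw [hV.two_mul_dotProduct_mulVec hVs, hW.two_mul_dotProduct_mulVec hWs]
    gcongr with i _ j hj
    exact hVW i j (ne_of_mem_erase hj).symm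
  linarith

lemma card_sub_one_mul_le {m : ℝ} (hV : V.IsDiagBalanced) (hlb : ∀ i j, i ≠ j → m ≤ V i j)
    (i : ι) : ((Fintype.card ι : ℝ) - 1) * m ≤ V i i := by
  rw [hV i, ← card_univ, ← cast_card_erase_of_mem (mem_univ i), ← nsmul_eq_mul]
  exact card_nsmul_le_sum _ _ _ fun j hj => hlb i j (ne_of_mem_erase hj).symm

end IsDiagBalanced

variable (ι) in
def completeSignlessLaplacian : Matrix ι ι ℝ :=
  ((Fintype.card ι : ℝ) - 2) • 1 + of fun _ _ => 1

local notation "Q" => completeSignlessLaplacian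

lemma completeSignlessLaplacian_apply_of_ne {i j : ι} (h : i ≠ j) : Q ι i j = 1 := by
  simp [completeSignlessLaplacian, one_apply_ne h]

lemma isSymm_completeSignlessLaplacian : (Q ι).IsSymm := by
  ext i j
  simp [completeSignlessLaplacian, one_apply, eq_comm]

lemma isDiagBalanced_completeSignlessLaplacian : (Q ι).IsDiagBalanced := fun i => by
  rw [sum_erase_eq_sub (mem_univ i)]
  simp [completeSignlessLaplacian, one_apply, sum_add_distrib]
  ring

lemma completeSignlessLaplacian_mulVec (x : ι → ℝ) :
    Q ι *ᵥ x = ((Fintype.card ι : ℝ) - 2) • x + fun _ => ∑ k, x k := by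
  rw [completeSignlessLaplacian, add_mulVec, smul_mulVec, one_mulVec]
  ext i
  simp [mulVec, dotProduct]

lemma dotProduct_completeSignlessLaplacian_mulVec (x : ι → ℝ) :
    x ⬝ᵥ Q ι *ᵥ x = ((Fintype.card ι : ℝ) - 2) * (x ⬝ᵥ x) + (∑ k, x k) ^ 2 := by
  rw [completeSignlessLaplacian_mulVec, dotProduct_add, dotProduct_smul, smul_eq_mul]
  simp [dotProduct, sq, sum_mul]

lemma dotProduct_smul_completeSignlessLaplacian_mulVec_nonneg (h : 2 ≤ Fintype.card ι) {c : ℝ}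
    (hc : 0 ≤ c) (x : ι → ℝ) : 0 ≤ x ⬝ᵥ (c • Q ι) *ᵥ x := by
  have h2 : (2 : ℝ) ≤ Fintype.card ι := by exact_mod_cast h
  have hxx : 0 ≤ x ⬝ᵥ x := sum_nonneg fun k _ => mul_self_nonneg (x k)
  rw [smul_mulVec, dotProduct_smul, smul_eq_mul, dotProduct_completeSignlessLaplacian_mulVec]
  have := mul_nonneg (sub_nonneg.mpr h2) hxx
  positivity

lemma smul_completeSignlessLaplacian_mul (h : 3 ≤ Fintype.card ι) {c : ℝ} (hc : c ≠ 0) :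
    (c • Q ι) * (c⁻¹ • ((Fintype.card ι : ℝ) - 2)⁻¹ •
      (1 - (2 * ((Fintype.card ι : ℝ) - 1))⁻¹ • of fun _ _ => 1)) = 1 := by
  have h3 : (3 : ℝ) ≤ Fintype.card ι := by exact_mod_cast h
  have h1 : (Fintype.card ι : ℝ) - 1 ≠ 0 := by linarith
  have h2 : (Fintype.card ι : ℝ) - 2 ≠ 0 := by linarith
  rw [smul_mul_smul_comm, mul_inv_cancel₀ hc, one_smul]
  ext i j
  simp [completeSignlessLaplacian, mul_apply, one_apply, add_mul, ite_mul, sum_add_distrib,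
    mul_sub, sum_sub_distrib]
  split_ifs <;> field_simp <;> ring

lemma isUnit_det_smul_completeSignlessLaplacian (h : 3 ≤ Fintype.card ι) {c : ℝ} (hc : c ≠ 0) :
    IsUnit (c • Q ι).det :=
  isUnit_det_of_right_inverse (smul_completeSignlessLaplacian_mul h hc)

lemma dotProduct_smul_completeSignlessLaplacian_inv_mulVec (h : 3 ≤ Fintype.card ι) {c : ℝ}
    (hc : c ≠ 0) (x : ι → ℝ) :
    x ⬝ᵥ (c • Q ι)⁻¹ *ᵥ x = (x ⬝ᵥ x - (2 * ((Fintype.card ι : ℝ) - 1))⁻¹ * (∑ k, x k) ^ 2) /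
      (c * ((Fintype.card ι : ℝ) - 2)) := by
  have h3 : (3 : ℝ) ≤ Fintype.card ι := by exact_mod_cast h
  have h1 : (Fintype.card ι : ℝ) - 1 ≠ 0 := by linarith
  have h2 : (Fintype.card ι : ℝ) - 2 ≠ 0 := by linarith
  rw [inv_eq_right_inv (smul_completeSignlessLaplacian_mul h hc)]
  simp only [smul_mulVec, sub_mulVec, one_mulVec, dotProduct_smul, dotProduct_sub, smul_eq_mul]
  simp [dotProduct, mulVec, ← sum_mul, sq]
  field_simp

namespace IsDiagBalanced

variable {V : Matrix ι ι ℝ} {m M : ℝ}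

lemma smul_completeSignlessLaplacian_le (hV : V.IsDiagBalanced) (hsym : V.IsSymm)
    (hlb : ∀ i j, i ≠ j → m ≤ V i j) (x : ι → ℝ) : x ⬝ᵥ (m • Q ι) *ᵥ x ≤ x ⬝ᵥ V *ᵥ x :=
  (isDiagBalanced_completeSignlessLaplacian.smul m).dotProduct_mulVec_le hV
    (isSymm_completeSignlessLaplacian.smul m) hsym
    (fun i j hij => by simpa [completeSignlessLaplacian_apply_of_ne hij] using hlb i j hij) x

lemma le_smul_completeSignlessLaplacian (hV : V.IsDiagBalanced) (hsym : V.IsSymm)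
    (hub : ∀ i j, i ≠ j → V i j ≤ M) (x : ι → ℝ) : x ⬝ᵥ V *ᵥ x ≤ x ⬝ᵥ (M • Q ι) *ᵥ x :=
  hV.dotProduct_mulVec_le (isDiagBalanced_completeSignlessLaplacian.smul M) hsym
    (isSymm_completeSignlessLaplacian.smul M)
    (fun i j hij => by simpa [completeSignlessLaplacian_apply_of_ne hij] using hub i j hij) x

lemma isUnit_det (hV : V.IsDiagBalanced) (hsym : V.IsSymm) (hn : 3 ≤ Fintype.card ι)
    (hm : 0 < m) (hlb : ∀ i j, i ≠ j → m ≤ V i j) : IsUnit V.det := by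
  rw [isUnit_iff_ne_zero]
  intro hdet
  obtain ⟨x, hx, hVx⟩ := exists_mulVec_eq_zero_iff.mpr hdet
  have hle := hV.smul_completeSignlessLaplacian_le hsym hlb x
  rw [hVx, dotProduct_zero, smul_mulVec, dotProduct_smul, smul_eq_mul,
    dotProduct_completeSignlessLaplacian_mulVec] at hle
  have hxx : 0 < x ⬝ᵥ x := lt_of_le_of_ne (sum_nonneg fun k _ => mul_self_nonneg (x k))
    (Ne.symm (dotProduct_self_eq_zero.not.mpr hx))
  have h3 : (3 : ℝ) ≤ Fintype.card ι := by exact_mod_cast hn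
  linarith [mul_pos hm (mul_pos (by linarith : (0 : ℝ) < Fintype.card ι - 2) hxx),
    mul_nonneg hm.le (sq_nonneg (∑ k, x k))]

lemma dotProduct_inv_mulVec_le (hV : V.IsDiagBalanced) (hsym : V.IsSymm)
    (hn : 3 ≤ Fintype.card ι) (hm : 0 < m) (hlb : ∀ i j, i ≠ j → m ≤ V i j) (x : ι → ℝ) :
    x ⬝ᵥ V⁻¹ *ᵥ x ≤ (x ⬝ᵥ x - (2 * ((Fintype.card ι : ℝ) - 1))⁻¹ * (∑ k, x k) ^ 2) /
      (m * ((Fintype.card ι : ℝ) - 2)) := by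
  rw [← dotProduct_smul_completeSignlessLaplacian_inv_mulVec hn hm.ne']
  exact dotProduct_inv_mulVec_le_of_le (hV.isUnit_det hsym hn hm hlb)
    (isUnit_det_smul_completeSignlessLaplacian hn hm.ne') (isSymm_completeSignlessLaplacian.smul m)
    (dotProduct_smul_completeSignlessLaplacian_mulVec_nonneg (by omega) hm.le)
    (hV.smul_completeSignlessLaplacian_le hsym hlb) x

lemma le_dotProduct_inv_mulVec (hV : V.IsDiagBalanced) (hsym : V.IsSymm)
    (hn : 3 ≤ Fintype.card ι) (hm : 0 < m) (hmM : m ≤ M) (hlb : ∀ i j, i ≠ j → m ≤ V i j)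
    (hub : ∀ i j, i ≠ j → V i j ≤ M) (x : ι → ℝ) :
    (x ⬝ᵥ x - (2 * ((Fintype.card ι : ℝ) - 1))⁻¹ * (∑ k, x k) ^ 2) /
      (M * ((Fintype.card ι : ℝ) - 2)) ≤ x ⬝ᵥ V⁻¹ *ᵥ x := by
  have hM : M ≠ 0 := (hm.trans_le hmM).ne'
  rw [← dotProduct_smul_completeSignlessLaplacian_inv_mulVec hn hM]
  exact dotProduct_inv_mulVec_le_of_le (isUnit_det_smul_completeSignlessLaplacian hn hM)
    (hV.isUnit_det hsym hn hm hlb) hsym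
    (fun w => (dotProduct_smul_completeSignlessLaplacian_mulVec_nonneg (by omega) hm.le w).trans
      (hV.smul_completeSignlessLaplacian_le hsym hlb w))
    (hV.le_smul_completeSignlessLaplacian hsym hub) x

end IsDiagBalanced

end Fintype

variable [DecidableEq ι]

def normalizedOffDiagRow (V : Matrix ι ι ℝ) (i : ι) : ι → ℝ :=
  fun k => if k = i then 0 else V i k / V i i

lemma normalizedOffDiagRow_nonneg {V : Matrix ι ι ℝ} {i : ι} (hV₀ : ∀ k, k ≠ i → 0 ≤ V i k)
    (hd : 0 ≤ V i i) : 0 ≤ normalizedOffDiagRow V i := fun k => by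
  unfold normalizedOffDiagRow
  split_ifs with hk
  · exact le_rfl
  · exact div_nonneg (hV₀ k hk) hd

lemma normalizedOffDiagRow_le {V : Matrix ι ι ℝ} {i : ι} {c M : ℝ} (hM : 0 ≤ M)
    (hub : ∀ k, k ≠ i → V i k ≤ M) (hc : 0 < c) (hd : c ≤ V i i) (k : ι) :
    normalizedOffDiagRow V i k ≤ M / c := by
  unfold normalizedOffDiagRow
  split_ifs with hk
  · positivity
  · exact div_le_div₀ hM (hub k hk) hc hd

variable [Fintype ι]

lemma transpose_mul_diagonal_inv_sub_one {V : Matrix ι ι ℝ} (hsym : V.IsSymm)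
    (hd : ∀ i, V i i ≠ 0) (i : ι) :
    (V * diagonal (fun i => (V i i)⁻¹) - 1)ᵀ i = normalizedOffDiagRow V i := by
  ext k
  rw [transpose_apply, sub_apply, mul_diagonal, one_apply, normalizedOffDiagRow]
  split_ifs with h
  · subst h; simp [hd]
  · rw [hsym.apply, div_eq_mul_inv, sub_zero]

lemma transpose_diagonal_inv_mul_mul_sub_apply {V : Matrix ι ι ℝ} (hd : ∀ i, V i i ≠ 0)
    (i j : ι) :
    ((diagonal fun i => (V i i)⁻¹)ᵀ * V * diagonal (fun i => (V i i)⁻¹) -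
      (diagonal fun i => (V i i)⁻¹)ᵀ) i j = if i = j then 0 else V i j / (V i i * V j j) := by
  rw [diagonal_transpose, sub_apply, mul_diagonal, diagonal_mul, diagonal_apply]
  split_ifs with h
  · subst h; field_simp [hd i]; ring
  · rw [sub_zero, div_eq_mul_inv, mul_inv]; ring

lemma abs_transpose_diagonal_inv_mul_mul_sub_apply_le {V : Matrix ι ι ℝ} {c M : ℝ} (hc : 0 < c)
    (hM : 0 ≤ M) (hd : ∀ i, c ≤ V i i) (hV₀ : ∀ i j, i ≠ j → 0 ≤ V i j)
    (hub : ∀ i j, i ≠ j → V i j ≤ M) (i j : ι) :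
    |((diagonal fun i => (V i i)⁻¹)ᵀ * V * diagonal (fun i => (V i i)⁻¹) -
      (diagonal fun i => (V i i)⁻¹)ᵀ) i j| ≤ M / c ^ 2 := by
  have hd₀ : ∀ i, 0 < V i i := fun i => hc.trans_le (hd i)
  rw [transpose_diagonal_inv_mul_mul_sub_apply fun i => (hd₀ i).ne']
  split_ifs with hij
  · rw [abs_zero]; positivity
  · rw [abs_of_nonneg (div_nonneg (hV₀ i j hij) (mul_pos (hd₀ i) (hd₀ j)).le), sq]
    exact div_le_div₀ hM (hub i j hij) (by positivity) (mul_le_mul (hd i) (hd j) hc.le (hd₀ i).le)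

namespace IsDiagBalanced

variable {V : Matrix ι ι ℝ} {m M : ℝ}

lemma sum_normalizedOffDiagRow (hV : V.IsDiagBalanced) {i : ι} (hd : V i i ≠ 0) :
    ∑ k, normalizedOffDiagRow V i k = 1 := by
  simp only [normalizedOffDiagRow]
  rw [sum_ite, sum_const_zero, zero_add, filter_ne', ← sum_div, ← hV i, div_self hd]

lemma abs_inv_sub_diagonal_apply_le (hV : V.IsDiagBalanced) (hsym : V.IsSymm)
    (hn : 3 ≤ Fintype.card ι) (hm : 0 < m) (hmM : m ≤ M) (hlb : ∀ i j, i ≠ j → m ≤ V i j)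
    (hub : ∀ i j, i ≠ j → V i j ≤ M) (i j : ι) :
    |(V⁻¹ - diagonal fun i => (V i i)⁻¹) i j| ≤
      (M / (((Fintype.card ι : ℝ) - 1) * m) - (2 * ((Fintype.card ι : ℝ) - 1))⁻¹) /
        (m * ((Fintype.card ι : ℝ) - 2)) + M / (((Fintype.card ι : ℝ) - 1) * m) ^ 2 := by
  have h3 : (3 : ℝ) ≤ Fintype.card ι := by exact_mod_cast hn
  set n : ℝ := (Fintype.card ι : ℝ)
  have hM : 0 < M := hm.trans_le hmM
  have hnm : 0 < (n - 1) * m := mul_pos (by linarith) hm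
  have hd : ∀ i, (n - 1) * m ≤ V i i := hV.card_sub_one_mul_le hlb
  have hd₀ : ∀ i, 0 < V i i := fun i => hnm.trans_le (hd i)
  have hd₀' : ∀ i, V i i ≠ 0 := fun i => (hd₀ i).ne'
  set r := normalizedOffDiagRow V
  have hr₀ : ∀ i, 0 ≤ r i := fun i =>
    normalizedOffDiagRow_nonneg (fun k hk => hm.le.trans (hlb i k hk.symm)) (hd₀ i).le
  have hrt : ∀ i k, r i k ≤ M / ((n - 1) * m) := fun i =>
    normalizedOffDiagRow_le hM.le (fun k hk => hub i k hk.symm) hnm (hd i)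
  have hr₁ : ∀ i, ∑ k, r i k = 1 := fun i => hV.sum_normalizedOffDiagRow (hd₀' i)
  have hdot : ∀ i j, r i ⬝ᵥ r j ≤ M / ((n - 1) * m) := fun i j =>
    dotProduct_le_of_le_of_sum_eq_one (hrt i) (hr₀ j) (hr₁ j)
  have hst : 2 * (2 * (n - 1))⁻¹ ≤ M / ((n - 1) * m) := by
    rw [show 2 * (2 * (n - 1))⁻¹ = m / ((n - 1) * m) by field_simp]
    gcongr
  have hX := abs_dotProduct_mulVec_le hsym.inv (by linarith) hm hmM hst
    (hV.le_dotProduct_inv_mulVec hsym hn hm hmM hlb hub)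
    (hV.dotProduct_inv_mulVec_le hsym hn hm hlb) (hr₁ i) (hr₁ j) (hdot i i) (hdot j j)
    (dotProduct_nonneg_of_nonneg (hr₀ i) (hr₀ j)) (hdot i j)
  rw [inv_sub_eq_transpose_mul_inv_mul (hV.isUnit_det hsym hn hm hlb) hsym, sub_apply,
    mul_mul_apply, transpose_mul_diagonal_inv_sub_one hsym hd₀' i,
    transpose_mul_diagonal_inv_sub_one hsym hd₀' j]
  exact (abs_sub _ _).trans (add_le_add hX (abs_transpose_diagonal_inv_mul_mul_sub_apply_le hnm
    hM.le hd (fun i j hij => hm.le.trans (hlb i j hij)) hub i j))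

end IsDiagBalanced

end Matrix

lemma inverse_error_bound_le {n m M : ℝ} (hn : 3 ≤ n) (hm : 0 < m) :
    (M / ((n - 1) * m) - (2 * (n - 1))⁻¹) / (m * (n - 2)) + M / ((n - 1) * m) ^ 2 ≤
      1 / (n - 1) ^ 2 * (M / (2 * m ^ 2) + n * M ^ 2 / (2 * (n - 2) * m ^ 3) +
        (3 * n - 2) / (2 * n * m)) := by
  have h1 : 0 < n - 1 := by linarith
  have h2 : 0 < n - 2 := by linarith
  rw [← sub_nonneg]
  have key : 1 / (n - 1) ^ 2 * (M / (2 * m ^ 2) + n * M ^ 2 / (2 * (n - 2) * m ^ 3) +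
        (3 * n - 2) / (2 * n * m)) -
      ((M / ((n - 1) * m) - (2 * (n - 1))⁻¹) / (m * (n - 2)) + M / ((n - 1) * m) ^ 2) =
      ((n * M - (3 * n - 4) / 2 * m) ^ 2 + n * (7 * n - 12) / 4 * m ^ 2) /
        (2 * n * (n - 1) ^ 2 * (n - 2) * m ^ 3) := by
    field_simp
    ring
  rw [key]
  have : 0 ≤ n * (7 * n - 12) := by nlinarith
  positivity

/-- for a diagonally balanced matrix `V ∈ L_n(m, M)`, `V` is invertible
and the diagonal matrix `S = diag(1/v_11, …, 1/v_nn)` approximates `V⁻¹` with the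
stated entrywise error bound. -/
theorem diagonally_balanced_inverse_approx
    (n : ℕ) (hn : 3 ≤ n) (m M : ℝ) (hm : 0 < m) (hmM : m ≤ M)
    (V : Matrix (Fin n) (Fin n) ℝ) (hsym : V.IsSymm)
    (hbal : ∀ i, V i i = ∑ j ∈ univ.erase i, V i j)
    (hlb : ∀ i j, i ≠ j → m ≤ V i j) (hub : ∀ i j, i ≠ j → V i j ≤ M) :
    IsUnit V.det ∧
      ∀ i j, |(V⁻¹ - Matrix.diagonal (fun i => (V i i)⁻¹)) i j| ≤
        (1 / ((n : ℝ) - 1) ^ 2) *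
          (M / (2 * m ^ 2) + (n : ℝ) * M ^ 2 / (2 * ((n : ℝ) - 2) * m ^ 3) +
            (3 * (n : ℝ) - 2) / (2 * (n : ℝ) * m)) := by
  have hV : V.IsDiagBalanced := hbal
  have hcard : 3 ≤ Fintype.card (Fin n) := by rwa [Fintype.card_fin]
  refine ⟨hV.isUnit_det hsym hcard hm hlb, fun i j => ?_⟩
  have h := hV.abs_inv_sub_diagonal_apply_le hsym hcard hm hmM hlb hub i j
  rw [Fintype.card_fin] at h
  exact h.trans (inverse_error_bound_le (by exact_mod_cast hn) hm)

end
end
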